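/- The poset P (the 33-element poset Γ_M from the Auslander–Reiten quiver of S⁺(2,4) in characteristic 3) contains none of the six Nazarova posets (1,1,1,1,1), (1,1,1,2), (2,2,3), (1,3,4), (1,2,6), (N,5) as a full subposet, where components are pairwise incomparable. -/
import Mathlib


/-- The covering relations of the 33-element poset `Γ_M` (Auslander–Reiten poset of
`S⁺(2,4)` in characteristic 3, followed by a chain `27 < ⋯ < 33`).
Element `k` of the paper (1-based) is represented by `k - 1 : Fin 33`. -/
def cov : List (Fin 33 × Fin 33) :=
  [(0,1),
   (1,2),(1,3),
   (2,4),(2,5),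
   (3,5),(3,6),
   (4,7),(4,8),
   (5,8),(5,9),
   (6,9),
   (7,10),(7,11),
   (8,11),(8,12),
   (9,12),
   (10,13),(10,14),
   (11,14),(11,15),
   (12,15),(12,16),
   (13,17),
   (14,17),(14,18),
   (15,18),(15,19),
   (16,19),
   (18,20),
   (19,20),(19,21),
   (20,22),
   (21,22),(21,23),
   (22,24),(22,25),
   (23,25),
   (24,26),
   (25,26),
   (26,27),(27,28),(28,29),(29,30),(30,31),(31,32)]

/-- The partial order of `Γ_M`: the reflexive-transitive closure of the covering
relations. -/
def ple (a b : Fin 33) : Prop :=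
  Relation.ReflTransGen (fun x y => (x, y) ∈ cov) a b

/-- Strict order. -/
def plt (a b : Fin 33) : Prop := ple a b ∧ a ≠ b

/-- Incomparability in `Γ_M`. -/
def incomp (a b : Fin 33) : Prop := ¬ ple a b ∧ ¬ ple b a

/-- A chain `x₁ < x₂ < ⋯ < x_k` in `Γ_M`, given as a list. -/
def IsChain' (l : List (Fin 33)) : Prop := l.Chain' plt

/-- All elements of one list incomparable with all elements of another. -/
def AllIncomp (l₁ l₂ : List (Fin 33)) : Prop := ∀ x ∈ l₁, ∀ y ∈ l₂, incomp x y

/-- A full subposet of `Γ_M` isomorphic to the disjoint union of chains of lengths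
`ns`: chains `c i` of the prescribed sizes, pairwise incomparable between components. -/
def HasChainSum (ns : List ℕ) : Prop :=
  ∃ c : Fin ns.length → List (Fin 33),
    (∀ i, (c i).length = ns.get i) ∧ (∀ i, IsChain' (c i)) ∧
    ∀ i j, i ≠ j → AllIncomp (c i) (c j)

/-- A full subposet isomorphic to the poset `N` (`t₁ < b₁`, `t₁ < b₂`, `t₂ < b₂`,
and the pairs `(t₁,t₂)`, `(b₁,b₂)`, `(t₂,b₁)` incomparable). -/
def HasN (t₁ t₂ b₁ b₂ : Fin 33) : Prop :=
  plt t₁ b₁ ∧ plt t₁ b₂ ∧ plt t₂ b₂ ∧ incomp t₁ t₂ ∧ incomp b₁ b₂ ∧ incomp t₂ b₁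

def upsL : List (List (Fin 33)) :=
  [[0, 1, 2, 3, 4, 5, 6, 7, 8, 9, 10, 11, 12, 13, 14, 15, 16, 17, 18, 19, 20, 21, 22, 23, 24, 25, 26, 27, 28, 29, 30, 31, 32], [1, 2, 3, 4, 5, 6, 7, 8, 9, 10, 11, 12, 13, 14, 15, 16, 17, 18, 19, 20, 21, 22, 23, 24, 25, 26, 27, 28, 29, 30, 31, 32], [2, 4, 5, 7, 8, 9, 10, 11, 12, 13, 14, 15, 16, 17, 18, 19, 20, 21, 22, 23, 24, 25, 26, 27, 28, 29, 30, 31, 32], [3, 5, 6, 8, 9, 11, 12, 14, 15, 16, 17, 18, 19, 20, 21, 22, 23, 24, 25, 26, 27, 28, 29, 30, 31, 32], [4, 7, 8, 10, 11, 12, 13, 14, 15, 16, 17, 18, 19, 20, 21, 22, 23, 24, 25, 26, 27, 28, 29, 30, 31, 32], [5, 8, 9, 11, 12, 14, 15, 16, 17, 18, 19, 20, 21, 22, 23, 24, 25, 26, 27, 28, 29, 30, 31, 32], [6, 9, 12, 15, 16, 18, 19, 20, 21, 22, 23, 24, 25, 26, 27, 28, 29, 30, 31, 32], [7, 10, 11,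 13, 14, 15, 17, 18, 19, 20, 21, 22, 23, 24, 25, 26, 27, 28, 29, 30, 31, 32], [8, 11, 12, 14, 15, 16, 17, 18, 19, 20, 21, 22, 23, 24, 25, 26, 27, 28, 29, 30, 31, 32], [9, 12, 15, 16, 18, 19, 20, 21, 22, 23, 24, 25, 26, 27, 28, 29, 30, 31, 32], [10, 13, 14, 17, 18, 20, 22, 24, 25, 26, 27, 28, 29, 30, 31, 32], [11, 14, 15, 17, 18, 19, 20, 21, 22, 23, 24, 25, 26, 27, 28, 29, 30, 31, 32], [12, 15, 16, 18, 19, 20, 21, 22, 23, 24, 25, 26, 27, 28, 29, 30, 31, 32], [13, 17], [14, 17, 18, 20, 22, 24, 25, 26, 27, 28, 29, 30, 31, 32], [15, 18, 19, 20, 21, 22, 23, 24, 25, 26, 27, 28, 29, 30, 31, 32], [16, 19, 20, 21, 22, 23, 24, 25, 26, 27, 28, 29, 30, 31, 32], [17], [18, 20, 22, 24, 25, 26, 27, 28, 29, 30, 31, 32], [19, 20, 21, 22, 23, 24, 25, 26, 27, 28, 29, 30, 31, 32], [20, 22, 24, 25, 26, 27, 28, 29, 30, 31, 32], [21, 22,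 23, 24, 25, 26, 27, 28, 29, 30, 31, 32], [22, 24, 25, 26, 27, 28, 29, 30, 31, 32], [23, 25, 26, 27, 28, 29, 30, 31, 32], [24, 26, 27, 28, 29, 30, 31, 32], [25, 26, 27, 28, 29, 30, 31, 32], [26, 27, 28, 29, 30, 31, 32], [27, 28, 29, 30, 31, 32], [28, 29, 30, 31, 32], [29, 30, 31, 32], [30, 31, 32], [31, 32], [32]]

def adjL : List (List (Fin 33)) :=
  [[1], [2, 3], [4, 5], [5, 6], [7, 8], [8, 9], [9], [10, 11], [11, 12], [12], [13, 14], [14, 15], [15, 16], [17], [17, 18], [18, 19], [19], [], [20], [20, 21], [22], [22, 23], [24, 25], [25], [26], [26], [27], [28], [29], [30], [31], [32], []]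


set_option maxRecDepth 20000

def leb (a b : Fin 33) : Bool := (upsL.getD a.val []).contains b

def sltb (a b : Fin 33) : Bool := leb a b && !(a == b)

def incb (a b : Fin 33) : Bool := !leb a b && !leb b a

def reach : Nat → Fin 33 → Fin 33 → Bool
  | 0, a, b => a == b
  | n+1, a, b => a == b || (adjL.getD a.val []).any (fun c => reach n c b)

theorem lebRefl : ∀ a : Fin 33, leb a a = true := by decide

theorem covClosed : ∀ x y : Fin 33, (x,y) ∈ cov → ∀ a : Fin 33, leb a x = true → leb a y = true := by decide

theorem adjCov : ∀ a c : Fin 33, c ∈ adjL.getD a.val [] → (a, c) ∈ cov := by decide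

theorem leb_reach : ∀ a b : Fin 33, leb a b = true → reach 17 a b = true := by decide

set_option synthInstance.maxSize 5000
set_option synthInstance.maxHeartbeats 2000000
set_option maxHeartbeats 4000000

theorem M11111 : ∀ a0 a1 : Fin 33, incb a0 a1 = true →
    ∀ a2 : Fin 33, incb a0 a2 = true → incb a1 a2 = true → 
    ∀ a3 : Fin 33, incb a0 a3 = true → incb a1 a3 = true → incb a2 a3 = true → 
    ∀ a4 : Fin 33, incb a0 a4 = true → incb a1 a4 = true → incb a2 a4 = true → incb a3 a4 = true → False := by decide

theorem M1112 : ∀ a b : Fin 33, incb a b = true →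
    ∀ c : Fin 33, incb a c = true → incb b c = true → 
    ∀ d1 : Fin 33, incb a d1 = true → incb b d1 = true → incb c d1 = true → 
    ∀ d2 : Fin 33, sltb d1 d2 = true → incb a d2 = true → incb b d2 = true → incb c d2 = true → False := by decide

theorem M223 : ∀ a1 b1 : Fin 33, incb a1 b1 = true →
    ∀ a2 : Fin 33, sltb a1 a2 = true → incb a2 b1 = true → 
    ∀ b2 : Fin 33, sltb b1 b2 = true → incb a1 b2 = true → incb a2 b2 = true → 
    ∀ c1 : Fin 33, incb a1 c1 = true → incb a2 c1 = true → incb b1 c1 = true → incb b2 c1 = true → 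
    ∀ c2 : Fin 33, sltb c1 c2 = true → incb a1 c2 = true → incb a2 c2 = true → incb b1 c2 = true → incb b2 c2 = true → 
    ∀ c3 : Fin 33, sltb c2 c3 = true → incb a1 c3 = true → incb a2 c3 = true → incb b1 c3 = true → incb b2 c3 = true → False := by decide

theorem M134 : ∀ b1 c1 : Fin 33, incb b1 c1 = true →
    ∀ a : Fin 33, incb b1 a = true → incb c1 a = true → 
    ∀ b2 : Fin 33, sltb b1 b2 = true → incb b2 c1 = true → incb b2 a = true → 
    ∀ c2 : Fin 33, sltb c1 c2 = true → incb b1 c2 = true → incb b2 c2 = true → incb a c2 = true → 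
    ∀ b3 : Fin 33, sltb b2 b3 = true → incb b3 c1 = true → incb b3 c2 = true → incb b3 a = true → 
    ∀ c3 : Fin 33, sltb c2 c3 = true → incb b1 c3 = true → incb b2 c3 = true → incb b3 c3 = true → incb a c3 = true → 
    ∀ c4 : Fin 33, sltb c3 c4 = true → incb b1 c4 = true → incb b2 c4 = true → incb b3 c4 = true → incb a c4 = true → False := by decide

theorem M126 : ∀ b1 c1 : Fin 33, incb b1 c1 = true →
    ∀ a : Fin 33, incb b1 a = true → incb c1 a = true → 
    ∀ b2 : Fin 33, sltb b1 b2 = true → incb b2 c1 = true → incb b2 a = true → 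
    ∀ c2 : Fin 33, sltb c1 c2 = true → incb b1 c2 = true → incb b2 c2 = true → incb a c2 = true → 
    ∀ c3 : Fin 33, sltb c2 c3 = true → incb b1 c3 = true → incb b2 c3 = true → incb a c3 = true → 
    ∀ c4 : Fin 33, sltb c3 c4 = true → incb b1 c4 = true → incb b2 c4 = true → incb a c4 = true → 
    ∀ c5 : Fin 33, sltb c4 c5 = true → incb b1 c5 = true → incb b2 c5 = true → incb a c5 = true → 
    ∀ c6 : Fin 33, sltb c5 c6 = true → incb b1 c6 = true → incb b2 c6 = true → incb a c6 = true → False := by decide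

theorem MN5 : ∀ t1 t2 : Fin 33, incb t1 t2 = true →
    ∀ b1 : Fin 33, sltb t1 b1 = true → incb t2 b1 = true → 
    ∀ b2 : Fin 33, sltb t1 b2 = true → sltb t2 b2 = true → incb b1 b2 = true → 
    ∀ l1 : Fin 33, incb t1 l1 = true → incb t2 l1 = true → incb b1 l1 = true → incb b2 l1 = true → 
    ∀ l2 : Fin 33, sltb l1 l2 = true → incb t1 l2 = true → incb t2 l2 = true → incb b1 l2 = true → incb b2 l2 = true → 
    ∀ l3 : Fin 33, sltb l2 l3 = true → incb t1 l3 = true → incb t2 l3 = true → incb b1 l3 = true → incb b2 l3 = true → 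
    ∀ l4 : Fin 33, sltb l3 l4 = true → incb t1 l4 = true → incb t2 l4 = true → incb b1 l4 = true → incb b2 l4 = true → 
    ∀ l5 : Fin 33, sltb l4 l5 = true → incb t1 l5 = true → incb t2 l5 = true → incb b1 l5 = true → incb b2 l5 = true → False := by decide


theorem ple_leb {a b : Fin 33} (h : ple a b) : leb a b = true := by
  induction h with
  | refl => exact lebRefl a
  | tail _ hcov ih => exact covClosed _ _ hcov _ ih

theorem reach_ple : ∀ (m : Nat) (a b : Fin 33), reach m a b = true → ple a b := by
  intro m
  induction m with
  | zero =>
    intro a b h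
    have : a = b := by simpa [reach] using h
    exact this ▸ Relation.ReflTransGen.refl
  | succ n ih =>
    intro a b h
    simp only [reach, Bool.or_eq_true, List.any_eq_true, beq_iff_eq] at h
    rcases h with rfl | ⟨d, hd, hr⟩
    · exact Relation.ReflTransGen.refl
    · exact Relation.ReflTransGen.head (adjCov a d hd) (ih d b hr)

theorem leb_ple {a b : Fin 33} (h : leb a b = true) : ple a b :=
  reach_ple 17 a b (leb_reach a b h)

theorem incb_of_incomp {a b : Fin 33} (h : incomp a b) : incb a b = true := by
  obtain ⟨h1, h2⟩ := h
  have e1 : leb a b = false := by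
    cases hx : leb a b with
    | false => rfl
    | true => exact absurd (leb_ple hx) h1
  have e2 : leb b a = false := by
    cases hx : leb b a with
    | false => rfl
    | true => exact absurd (leb_ple hx) h2
  simp [incb, e1, e2]

theorem sltb_of_plt {a b : Fin 33} (h : plt a b) : sltb a b = true := by
  obtain ⟨h1, h2⟩ := h
  simp [sltb, ple_leb h1, h2]

theorem len_succ' {α : Type} {l : List α} {n : ℕ} (h : l.length = n + 1) :
    ∃ a t, l = a :: t ∧ t.length = n := by
  cases l with
  | nil => simp at h
  | cons a t => exact ⟨a, t, rfl, by simpa using h⟩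

theorem eqL1 {l : List (Fin 33)} (h : l.length = 1) : ∃ x0, l = [x0] := by
  obtain ⟨x0, t0, rfl, h0⟩ := len_succ' h
  obtain rfl := List.eq_nil_of_length_eq_zero h0
  exact ⟨x0, rfl⟩

theorem eqL2 {l : List (Fin 33)} (h : l.length = 2) : ∃ x0 x1, l = [x0, x1] := by
  obtain ⟨x0, t0, rfl, h0⟩ := len_succ' h
  obtain ⟨x1, t1, rfl, h1⟩ := len_succ' h0
  obtain rfl := List.eq_nil_of_length_eq_zero h1
  exact ⟨x0, x1, rfl⟩

theorem eqL3 {l : List (Fin 33)} (h : l.length = 3) : ∃ x0 x1 x2, l = [x0, x1, x2] := by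
  obtain ⟨x0, t0, rfl, h0⟩ := len_succ' h
  obtain ⟨x1, t1, rfl, h1⟩ := len_succ' h0
  obtain ⟨x2, t2, rfl, h2⟩ := len_succ' h1
  obtain rfl := List.eq_nil_of_length_eq_zero h2
  exact ⟨x0, x1, x2, rfl⟩

theorem eqL4 {l : List (Fin 33)} (h : l.length = 4) : ∃ x0 x1 x2 x3, l = [x0, x1, x2, x3] := by
  obtain ⟨x0, t0, rfl, h0⟩ := len_succ' h
  obtain ⟨x1, t1, rfl, h1⟩ := len_succ' h0
  obtain ⟨x2, t2, rfl, h2⟩ := len_succ' h1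
  obtain ⟨x3, t3, rfl, h3⟩ := len_succ' h2
  obtain rfl := List.eq_nil_of_length_eq_zero h3
  exact ⟨x0, x1, x2, x3, rfl⟩

theorem eqL5 {l : List (Fin 33)} (h : l.length = 5) : ∃ x0 x1 x2 x3 x4, l = [x0, x1, x2, x3, x4] := by
  obtain ⟨x0, t0, rfl, h0⟩ := len_succ' h
  obtain ⟨x1, t1, rfl, h1⟩ := len_succ' h0
  obtain ⟨x2, t2, rfl, h2⟩ := len_succ' h1
  obtain ⟨x3, t3, rfl, h3⟩ := len_succ' h2
  obtain ⟨x4, t4, rfl, h4⟩ := len_succ' h3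
  obtain rfl := List.eq_nil_of_length_eq_zero h4
  exact ⟨x0, x1, x2, x3, x4, rfl⟩

theorem eqL6 {l : List (Fin 33)} (h : l.length = 6) : ∃ x0 x1 x2 x3 x4 x5, l = [x0, x1, x2, x3, x4, x5] := by
  obtain ⟨x0, t0, rfl, h0⟩ := len_succ' h
  obtain ⟨x1, t1, rfl, h1⟩ := len_succ' h0
  obtain ⟨x2, t2, rfl, h2⟩ := len_succ' h1
  obtain ⟨x3, t3, rfl, h3⟩ := len_succ' h2
  obtain ⟨x4, t4, rfl, h4⟩ := len_succ' h3
  obtain ⟨x5, t5, rfl, h5⟩ := len_succ' h4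
  obtain rfl := List.eq_nil_of_length_eq_zero h5
  exact ⟨x0, x1, x2, x3, x4, x5, rfl⟩

/-- The 33-element poset `Γ_M` contains none of the six Nazarova posets
`(1,1,1,1,1)`, `(1,1,1,2)`, `(2,2,3)`, `(1,3,4)`, `(1,2,6)`, `(N,5)` as a full
subposet. -/
theorem stmt16 :
    ¬ HasChainSum [1, 1, 1, 1, 1] ∧
    ¬ HasChainSum [1, 1, 1, 2] ∧
    ¬ HasChainSum [2, 2, 3] ∧
    ¬ HasChainSum [1, 3, 4] ∧
    ¬ HasChainSum [1, 2, 6] ∧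
    ¬ ∃ (t₁ t₂ b₁ b₂ : Fin 33) (l : List (Fin 33)),
        HasN t₁ t₂ b₁ b₂ ∧ l.length = 5 ∧ IsChain' l ∧
        AllIncomp [t₁, t₂, b₁, b₂] l := by
  refine ⟨?_, ?_, ?_, ?_, ?_, ?_⟩
  ·
    rintro ⟨c, hlen, hch, hinc⟩
    obtain ⟨a0, e0⟩ := eqL1 (hlen ⟨0, by decide⟩)
    obtain ⟨a1, e1⟩ := eqL1 (hlen ⟨1, by decide⟩)
    obtain ⟨a2, e2⟩ := eqL1 (hlen ⟨2, by decide⟩)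
    obtain ⟨a3, e3⟩ := eqL1 (hlen ⟨3, by decide⟩)
    obtain ⟨a4, e4⟩ := eqL1 (hlen ⟨4, by decide⟩)
    exact M11111 a0
      a1
      (incb_of_incomp (hinc ⟨0, by decide⟩ ⟨1, by decide⟩ (by decide) a0 (by rw [e0]; simp) a1 (by rw [e1]; simp)))
      a2
      (incb_of_incomp (hinc ⟨0, by decide⟩ ⟨2, by decide⟩ (by decide) a0 (by rw [e0]; simp) a2 (by rw [e2]; simp)))
      (incb_of_incomp (hinc ⟨1, by decide⟩ ⟨2, by decide⟩ (by decide) a1 (by rw [e1]; simp) a2 (by rw [e2]; simp)))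
      a3
      (incb_of_incomp (hinc ⟨0, by decide⟩ ⟨3, by decide⟩ (by decide) a0 (by rw [e0]; simp) a3 (by rw [e3]; simp)))
      (incb_of_incomp (hinc ⟨1, by decide⟩ ⟨3, by decide⟩ (by decide) a1 (by rw [e1]; simp) a3 (by rw [e3]; simp)))
      (incb_of_incomp (hinc ⟨2, by decide⟩ ⟨3, by decide⟩ (by decide) a2 (by rw [e2]; simp) a3 (by rw [e3]; simp)))
      a4
      (incb_of_incomp (hinc ⟨0, by decide⟩ ⟨4, by decide⟩ (by decide) a0 (by rw [e0]; simp) a4 (by rw [e4]; simp)))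
      (incb_of_incomp (hinc ⟨1, by decide⟩ ⟨4, by decide⟩ (by decide) a1 (by rw [e1]; simp) a4 (by rw [e4]; simp)))
      (incb_of_incomp (hinc ⟨2, by decide⟩ ⟨4, by decide⟩ (by decide) a2 (by rw [e2]; simp) a4 (by rw [e4]; simp)))
      (incb_of_incomp (hinc ⟨3, by decide⟩ ⟨4, by decide⟩ (by decide) a3 (by rw [e3]; simp) a4 (by rw [e4]; simp)))
  ·
    rintro ⟨c, hlen, hch, hinc⟩
    obtain ⟨a, e0⟩ := eqL1 (hlen ⟨0, by decide⟩)
    obtain ⟨b, e1⟩ := eqL1 (hlen ⟨1, by decide⟩)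
    obtain ⟨c, e2⟩ := eqL1 (hlen ⟨2, by decide⟩)
    obtain ⟨d1, d2, e3⟩ := eqL2 (hlen ⟨3, by decide⟩)
    have hk3 := hch ⟨3, by decide⟩
    rw [e3] at hk3
    obtain ⟨S_d1_d2, hk3_0⟩ := List.isChain_cons_cons.mp hk3
    exact M1112 a
      b
      (incb_of_incomp (hinc ⟨0, by decide⟩ ⟨1, by decide⟩ (by decide) a (by rw [e0]; simp) b (by rw [e1]; simp)))
      c
      (incb_of_incomp (hinc ⟨0, by decide⟩ ⟨2, by decide⟩ (by decide) a (by rw [e0]; simp) c (by rw [e2]; simp)))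
      (incb_of_incomp (hinc ⟨1, by decide⟩ ⟨2, by decide⟩ (by decide) b (by rw [e1]; simp) c (by rw [e2]; simp)))
      d1
      (incb_of_incomp (hinc ⟨0, by decide⟩ ⟨3, by decide⟩ (by decide) a (by rw [e0]; simp) d1 (by rw [e3]; simp)))
      (incb_of_incomp (hinc ⟨1, by decide⟩ ⟨3, by decide⟩ (by decide) b (by rw [e1]; simp) d1 (by rw [e3]; simp)))
      (incb_of_incomp (hinc ⟨2, by decide⟩ ⟨3, by decide⟩ (by decide) c (by rw [e2]; simp) d1 (by rw [e3]; simp)))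
      d2
      (sltb_of_plt S_d1_d2)
      (incb_of_incomp (hinc ⟨0, by decide⟩ ⟨3, by decide⟩ (by decide) a (by rw [e0]; simp) d2 (by rw [e3]; simp)))
      (incb_of_incomp (hinc ⟨1, by decide⟩ ⟨3, by decide⟩ (by decide) b (by rw [e1]; simp) d2 (by rw [e3]; simp)))
      (incb_of_incomp (hinc ⟨2, by decide⟩ ⟨3, by decide⟩ (by decide) c (by rw [e2]; simp) d2 (by rw [e3]; simp)))
  ·
    rintro ⟨c, hlen, hch, hinc⟩
    obtain ⟨a1, a2, e0⟩ := eqL2 (hlen ⟨0, by decide⟩)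
    obtain ⟨b1, b2, e1⟩ := eqL2 (hlen ⟨1, by decide⟩)
    obtain ⟨c1, c2, c3, e2⟩ := eqL3 (hlen ⟨2, by decide⟩)
    have hk0 := hch ⟨0, by decide⟩
    rw [e0] at hk0
    obtain ⟨S_a1_a2, hk0_0⟩ := List.isChain_cons_cons.mp hk0
    have hk1 := hch ⟨1, by decide⟩
    rw [e1] at hk1
    obtain ⟨S_b1_b2, hk1_0⟩ := List.isChain_cons_cons.mp hk1
    have hk2 := hch ⟨2, by decide⟩
    rw [e2] at hk2
    obtain ⟨S_c1_c2, hk2_0⟩ := List.isChain_cons_cons.mp hk2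
    obtain ⟨S_c2_c3, hk2_1⟩ := List.isChain_cons_cons.mp hk2_0
    exact M223 a1
      b1
      (incb_of_incomp (hinc ⟨0, by decide⟩ ⟨1, by decide⟩ (by decide) a1 (by rw [e0]; simp) b1 (by rw [e1]; simp)))
      a2
      (sltb_of_plt S_a1_a2)
      (incb_of_incomp (hinc ⟨0, by decide⟩ ⟨1, by decide⟩ (by decide) a2 (by rw [e0]; simp) b1 (by rw [e1]; simp)))
      b2
      (sltb_of_plt S_b1_b2)
      (incb_of_incomp (hinc ⟨0, by decide⟩ ⟨1, by decide⟩ (by decide) a1 (by rw [e0]; simp) b2 (by rw [e1]; simp)))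
      (incb_of_incomp (hinc ⟨0, by decide⟩ ⟨1, by decide⟩ (by decide) a2 (by rw [e0]; simp) b2 (by rw [e1]; simp)))
      c1
      (incb_of_incomp (hinc ⟨0, by decide⟩ ⟨2, by decide⟩ (by decide) a1 (by rw [e0]; simp) c1 (by rw [e2]; simp)))
      (incb_of_incomp (hinc ⟨0, by decide⟩ ⟨2, by decide⟩ (by decide) a2 (by rw [e0]; simp) c1 (by rw [e2]; simp)))
      (incb_of_incomp (hinc ⟨1, by decide⟩ ⟨2, by decide⟩ (by decide) b1 (by rw [e1]; simp) c1 (by rw [e2]; simp)))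
      (incb_of_incomp (hinc ⟨1, by decide⟩ ⟨2, by decide⟩ (by decide) b2 (by rw [e1]; simp) c1 (by rw [e2]; simp)))
      c2
      (sltb_of_plt S_c1_c2)
      (incb_of_incomp (hinc ⟨0, by decide⟩ ⟨2, by decide⟩ (by decide) a1 (by rw [e0]; simp) c2 (by rw [e2]; simp)))
      (incb_of_incomp (hinc ⟨0, by decide⟩ ⟨2, by decide⟩ (by decide) a2 (by rw [e0]; simp) c2 (by rw [e2]; simp)))
      (incb_of_incomp (hinc ⟨1, by decide⟩ ⟨2, by decide⟩ (by decide) b1 (by rw [e1]; simp) c2 (by rw [e2]; simp)))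
      (incb_of_incomp (hinc ⟨1, by decide⟩ ⟨2, by decide⟩ (by decide) b2 (by rw [e1]; simp) c2 (by rw [e2]; simp)))
      c3
      (sltb_of_plt S_c2_c3)
      (incb_of_incomp (hinc ⟨0, by decide⟩ ⟨2, by decide⟩ (by decide) a1 (by rw [e0]; simp) c3 (by rw [e2]; simp)))
      (incb_of_incomp (hinc ⟨0, by decide⟩ ⟨2, by decide⟩ (by decide) a2 (by rw [e0]; simp) c3 (by rw [e2]; simp)))
      (incb_of_incomp (hinc ⟨1, by decide⟩ ⟨2, by decide⟩ (by decide) b1 (by rw [e1]; simp) c3 (by rw [e2]; simp)))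
      (incb_of_incomp (hinc ⟨1, by decide⟩ ⟨2, by decide⟩ (by decide) b2 (by rw [e1]; simp) c3 (by rw [e2]; simp)))
  ·
    rintro ⟨c, hlen, hch, hinc⟩
    obtain ⟨a, e0⟩ := eqL1 (hlen ⟨0, by decide⟩)
    obtain ⟨b1, b2, b3, e1⟩ := eqL3 (hlen ⟨1, by decide⟩)
    obtain ⟨c1, c2, c3, c4, e2⟩ := eqL4 (hlen ⟨2, by decide⟩)
    have hk1 := hch ⟨1, by decide⟩
    rw [e1] at hk1
    obtain ⟨S_b1_b2, hk1_0⟩ := List.isChain_cons_cons.mp hk1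
    obtain ⟨S_b2_b3, hk1_1⟩ := List.isChain_cons_cons.mp hk1_0
    have hk2 := hch ⟨2, by decide⟩
    rw [e2] at hk2
    obtain ⟨S_c1_c2, hk2_0⟩ := List.isChain_cons_cons.mp hk2
    obtain ⟨S_c2_c3, hk2_1⟩ := List.isChain_cons_cons.mp hk2_0
    obtain ⟨S_c3_c4, hk2_2⟩ := List.isChain_cons_cons.mp hk2_1
    exact M134 b1
      c1
      (incb_of_incomp (hinc ⟨1, by decide⟩ ⟨2, by decide⟩ (by decide) b1 (by rw [e1]; simp) c1 (by rw [e2]; simp)))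
      a
      (incb_of_incomp (hinc ⟨1, by decide⟩ ⟨0, by decide⟩ (by decide) b1 (by rw [e1]; simp) a (by rw [e0]; simp)))
      (incb_of_incomp (hinc ⟨2, by decide⟩ ⟨0, by decide⟩ (by decide) c1 (by rw [e2]; simp) a (by rw [e0]; simp)))
      b2
      (sltb_of_plt S_b1_b2)
      (incb_of_incomp (hinc ⟨1, by decide⟩ ⟨2, by decide⟩ (by decide) b2 (by rw [e1]; simp) c1 (by rw [e2]; simp)))
      (incb_of_incomp (hinc ⟨1, by decide⟩ ⟨0, by decide⟩ (by decide) b2 (by rw [e1]; simp) a (by rw [e0]; simp)))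
      c2
      (sltb_of_plt S_c1_c2)
      (incb_of_incomp (hinc ⟨1, by decide⟩ ⟨2, by decide⟩ (by decide) b1 (by rw [e1]; simp) c2 (by rw [e2]; simp)))
      (incb_of_incomp (hinc ⟨1, by decide⟩ ⟨2, by decide⟩ (by decide) b2 (by rw [e1]; simp) c2 (by rw [e2]; simp)))
      (incb_of_incomp (hinc ⟨0, by decide⟩ ⟨2, by decide⟩ (by decide) a (by rw [e0]; simp) c2 (by rw [e2]; simp)))
      b3
      (sltb_of_plt S_b2_b3)
      (incb_of_incomp (hinc ⟨1, by decide⟩ ⟨2, by decide⟩ (by decide) b3 (by rw [e1]; simp) c1 (by rw [e2]; simp)))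
      (incb_of_incomp (hinc ⟨1, by decide⟩ ⟨2, by decide⟩ (by decide) b3 (by rw [e1]; simp) c2 (by rw [e2]; simp)))
      (incb_of_incomp (hinc ⟨1, by decide⟩ ⟨0, by decide⟩ (by decide) b3 (by rw [e1]; simp) a (by rw [e0]; simp)))
      c3
      (sltb_of_plt S_c2_c3)
      (incb_of_incomp (hinc ⟨1, by decide⟩ ⟨2, by decide⟩ (by decide) b1 (by rw [e1]; simp) c3 (by rw [e2]; simp)))
      (incb_of_incomp (hinc ⟨1, by decide⟩ ⟨2, by decide⟩ (by decide) b2 (by rw [e1]; simp) c3 (by rw [e2]; simp)))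
      (incb_of_incomp (hinc ⟨1, by decide⟩ ⟨2, by decide⟩ (by decide) b3 (by rw [e1]; simp) c3 (by rw [e2]; simp)))
      (incb_of_incomp (hinc ⟨0, by decide⟩ ⟨2, by decide⟩ (by decide) a (by rw [e0]; simp) c3 (by rw [e2]; simp)))
      c4
      (sltb_of_plt S_c3_c4)
      (incb_of_incomp (hinc ⟨1, by decide⟩ ⟨2, by decide⟩ (by decide) b1 (by rw [e1]; simp) c4 (by rw [e2]; simp)))
      (incb_of_incomp (hinc ⟨1, by decide⟩ ⟨2, by decide⟩ (by decide) b2 (by rw [e1]; simp) c4 (by rw [e2]; simp)))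
      (incb_of_incomp (hinc ⟨1, by decide⟩ ⟨2, by decide⟩ (by decide) b3 (by rw [e1]; simp) c4 (by rw [e2]; simp)))
      (incb_of_incomp (hinc ⟨0, by decide⟩ ⟨2, by decide⟩ (by decide) a (by rw [e0]; simp) c4 (by rw [e2]; simp)))
  ·
    rintro ⟨c, hlen, hch, hinc⟩
    obtain ⟨a, e0⟩ := eqL1 (hlen ⟨0, by decide⟩)
    obtain ⟨b1, b2, e1⟩ := eqL2 (hlen ⟨1, by decide⟩)
    obtain ⟨c1, c2, c3, c4, c5, c6, e2⟩ := eqL6 (hlen ⟨2, by decide⟩)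
    have hk1 := hch ⟨1, by decide⟩
    rw [e1] at hk1
    obtain ⟨S_b1_b2, hk1_0⟩ := List.isChain_cons_cons.mp hk1
    have hk2 := hch ⟨2, by decide⟩
    rw [e2] at hk2
    obtain ⟨S_c1_c2, hk2_0⟩ := List.isChain_cons_cons.mp hk2
    obtain ⟨S_c2_c3, hk2_1⟩ := List.isChain_cons_cons.mp hk2_0
    obtain ⟨S_c3_c4, hk2_2⟩ := List.isChain_cons_cons.mp hk2_1
    obtain ⟨S_c4_c5, hk2_3⟩ := List.isChain_cons_cons.mp hk2_2
    obtain ⟨S_c5_c6, hk2_4⟩ := List.isChain_cons_cons.mp hk2_3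
    exact M126 b1
      c1
      (incb_of_incomp (hinc ⟨1, by decide⟩ ⟨2, by decide⟩ (by decide) b1 (by rw [e1]; simp) c1 (by rw [e2]; simp)))
      a
      (incb_of_incomp (hinc ⟨1, by decide⟩ ⟨0, by decide⟩ (by decide) b1 (by rw [e1]; simp) a (by rw [e0]; simp)))
      (incb_of_incomp (hinc ⟨2, by decide⟩ ⟨0, by decide⟩ (by decide) c1 (by rw [e2]; simp) a (by rw [e0]; simp)))
      b2
      (sltb_of_plt S_b1_b2)
      (incb_of_incomp (hinc ⟨1, by decide⟩ ⟨2, by decide⟩ (by decide) b2 (by rw [e1]; simp) c1 (by rw [e2]; simp)))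
      (incb_of_incomp (hinc ⟨1, by decide⟩ ⟨0, by decide⟩ (by decide) b2 (by rw [e1]; simp) a (by rw [e0]; simp)))
      c2
      (sltb_of_plt S_c1_c2)
      (incb_of_incomp (hinc ⟨1, by decide⟩ ⟨2, by decide⟩ (by decide) b1 (by rw [e1]; simp) c2 (by rw [e2]; simp)))
      (incb_of_incomp (hinc ⟨1, by decide⟩ ⟨2, by decide⟩ (by decide) b2 (by rw [e1]; simp) c2 (by rw [e2]; simp)))
      (incb_of_incomp (hinc ⟨0, by decide⟩ ⟨2, by decide⟩ (by decide) a (by rw [e0]; simp) c2 (by rw [e2]; simp)))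
      c3
      (sltb_of_plt S_c2_c3)
      (incb_of_incomp (hinc ⟨1, by decide⟩ ⟨2, by decide⟩ (by decide) b1 (by rw [e1]; simp) c3 (by rw [e2]; simp)))
      (incb_of_incomp (hinc ⟨1, by decide⟩ ⟨2, by decide⟩ (by decide) b2 (by rw [e1]; simp) c3 (by rw [e2]; simp)))
      (incb_of_incomp (hinc ⟨0, by decide⟩ ⟨2, by decide⟩ (by decide) a (by rw [e0]; simp) c3 (by rw [e2]; simp)))
      c4
      (sltb_of_plt S_c3_c4)
      (incb_of_incomp (hinc ⟨1, by decide⟩ ⟨2, by decide⟩ (by decide) b1 (by rw [e1]; simp) c4 (by rw [e2]; simp)))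
      (incb_of_incomp (hinc ⟨1, by decide⟩ ⟨2, by decide⟩ (by decide) b2 (by rw [e1]; simp) c4 (by rw [e2]; simp)))
      (incb_of_incomp (hinc ⟨0, by decide⟩ ⟨2, by decide⟩ (by decide) a (by rw [e0]; simp) c4 (by rw [e2]; simp)))
      c5
      (sltb_of_plt S_c4_c5)
      (incb_of_incomp (hinc ⟨1, by decide⟩ ⟨2, by decide⟩ (by decide) b1 (by rw [e1]; simp) c5 (by rw [e2]; simp)))
      (incb_of_incomp (hinc ⟨1, by decide⟩ ⟨2, by decide⟩ (by decide) b2 (by rw [e1]; simp) c5 (by rw [e2]; simp)))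
      (incb_of_incomp (hinc ⟨0, by decide⟩ ⟨2, by decide⟩ (by decide) a (by rw [e0]; simp) c5 (by rw [e2]; simp)))
      c6
      (sltb_of_plt S_c5_c6)
      (incb_of_incomp (hinc ⟨1, by decide⟩ ⟨2, by decide⟩ (by decide) b1 (by rw [e1]; simp) c6 (by rw [e2]; simp)))
      (incb_of_incomp (hinc ⟨1, by decide⟩ ⟨2, by decide⟩ (by decide) b2 (by rw [e1]; simp) c6 (by rw [e2]; simp)))
      (incb_of_incomp (hinc ⟨0, by decide⟩ ⟨2, by decide⟩ (by decide) a (by rw [e0]; simp) c6 (by rw [e2]; simp)))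
  ·
    rintro ⟨t1, t2, b1, b2, l, ⟨p1, p2, p3, q1, q2, q3⟩, hlen5, hch, hinc⟩
    obtain ⟨l1, l2, l3, l4, l5, el⟩ := eqL5 hlen5
    rw [el] at hch hinc
    obtain ⟨S_l1_l2, rest1⟩ := List.isChain_cons_cons.mp hch
    obtain ⟨S_l2_l3, rest2⟩ := List.isChain_cons_cons.mp rest1
    obtain ⟨S_l3_l4, rest3⟩ := List.isChain_cons_cons.mp rest2
    obtain ⟨S_l4_l5, rest4⟩ := List.isChain_cons_cons.mp rest3
    exact MN5 t1
      t2
      (incb_of_incomp q1)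
      b1
      (sltb_of_plt p1)
      (incb_of_incomp q3)
      b2
      (sltb_of_plt p2)
      (sltb_of_plt p3)
      (incb_of_incomp q2)
      l1
      (incb_of_incomp (hinc t1 (by simp) l1 (by simp)))
      (incb_of_incomp (hinc t2 (by simp) l1 (by simp)))
      (incb_of_incomp (hinc b1 (by simp) l1 (by simp)))
      (incb_of_incomp (hinc b2 (by simp) l1 (by simp)))
      l2
      (sltb_of_plt S_l1_l2)
      (incb_of_incomp (hinc t1 (by simp) l2 (by simp)))
      (incb_of_incomp (hinc t2 (by simp) l2 (by simp)))
      (incb_of_incomp (hinc b1 (by simp) l2 (by simp)))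
      (incb_of_incomp (hinc b2 (by simp) l2 (by simp)))
      l3
      (sltb_of_plt S_l2_l3)
      (incb_of_incomp (hinc t1 (by simp) l3 (by simp)))
      (incb_of_incomp (hinc t2 (by simp) l3 (by simp)))
      (incb_of_incomp (hinc b1 (by simp) l3 (by simp)))
      (incb_of_incomp (hinc b2 (by simp) l3 (by simp)))
      l4
      (sltb_of_plt S_l3_l4)
      (incb_of_incomp (hinc t1 (by simp) l4 (by simp)))
      (incb_of_incomp (hinc t2 (by simp) l4 (by simp)))
      (incb_of_incomp (hinc b1 (by simp) l4 (by simp)))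
      (incb_of_incomp (hinc b2 (by simp) l4 (by simp)))
      l5
      (sltb_of_plt S_l4_l5)
      (incb_of_incomp (hinc t1 (by simp) l5 (by simp)))
      (incb_of_incomp (hinc t2 (by simp) l5 (by simp)))
      (incb_of_incomp (hinc b1 (by simp) l5 (by simp)))
      (incb_of_incomp (hinc b2 (by simp) l5 (by simp)))
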